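/- Let ≽ be a transitive binary relation on a type α, and let ≽' be a specificity refinement of ≽. Then for every set r ⊆ α, Best computed with the strict part of Relation.TransGen ≽' is contained in Best computed with the strict part of ≽: Best_{strict(Relation.TransGen ≽')}(r) ⊆ Best_{strict(≽)}(r). (Consequence of the paper's Proposition 1: applying S and then T to a transitively closed preference relation leads to smaller, i.e., cleaner, Best results.) -/

import Mathlib

/-!
Every strict preference `b ≻ a` is a conflict-free pair, so the specificity refinement keeps it:
`b ≽' a`. Conversely, everything `Relation.TransGen ≽'` relates is already related by the transitive
`≽`, so `b ≻ a` also forbids the reverse path from `a` to `b`. Hence `≻` is contained in the strict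
part of `Relation.TransGen ≽'`, and a weaker dominance relation leaves more elements undominated.
-/

/-- The strict part of a weak preference relation. -/
def strictPart {α : Type*} (R : α → α → Prop) (a b : α) : Prop :=
  R a b ∧ ¬ R b a

/-- The Best operator: elements of `r` not strictly dominated by any element of `r`. -/
def Best {α : Type*} (P : α → α → Prop) (r : Set α) : Set α :=
  {a ∈ r | ¬ ∃ b ∈ r, P b a}

/-- `R'` is a specificity refinement of `R`. -/
def SpecRefinement {α : Type*} (R R' : α → α → Prop) : Prop :=
  (∀ a b, R' a b → R a b) ∧ (∀ a b, R a b → ¬ R' a b → R b a)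

theorem best_subset_best_of_le {α : Type*} {P Q : α → α → Prop} (hPQ : P ≤ Q) (r : Set α) :
    Best Q r ⊆ Best P r :=
  fun _ ⟨har, hnd⟩ ↦ ⟨har, fun ⟨b, hbr, hba⟩ ↦ hnd ⟨b, hbr, hPQ b _ hba⟩⟩

namespace SpecRefinement

variable {α : Type*} {R R' : α → α → Prop}

theorem transGen_le [IsTrans α R] (h : SpecRefinement R R') : Relation.TransGen R' ≤ R :=
  Relation.transGen_minimal h.1

theorem of_strictPart (h : SpecRefinement R R') {a b : α} (hab : strictPart R a b) : R' a b :=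
  by_contra fun hn ↦ hab.2 (h.2 a b hab.1 hn)

theorem strictPart_le_strictPart_transGen [IsTrans α R] (h : SpecRefinement R R') :
    strictPart R ≤ strictPart (Relation.TransGen R') :=
  fun _ _ hab ↦ ⟨.single (h.of_strictPart hab), fun hba ↦ hab.2 (h.transGen_le _ _ hba)⟩

end SpecRefinement

theorem stmt_5 {α : Type*} (R R' : α → α → Prop)
    (htrans : Transitive R) (h : SpecRefinement R R') (r : Set α) :
    Best (strictPart (Relation.TransGen R')) r ⊆ Best (strictPart R) r :=
  haveI : IsTrans α R := ⟨fun _ _ _ ↦ @htrans _ _ _⟩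
  best_subset_best_of_le h.strictPart_le_strictPart_transGen r
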